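/- (Theorem 1, row eigenvector part.) Under assumption A1 with parameter θ ≥ 0, the function η*(y) = ∑_{j≥0} e^{θj}·g_j(y) is strictly positive and finite for every y ∈ S, and satisfies ∑_{x∈S} η*(x)·B(x,y) = λ*·η*(y) for every y ∈ S, where λ* = e^{-θ}; moreover η*(z) = 1. -/

import Mathlib

/-- Matrix powers: `B^0 = I`, `B^{n+1}(x,y) = ∑_w B^n(x,w) B(w,y)`. -/
noncomputable def matPow {S : Type*} [DecidableEq S] (B : S → S → ℝ) : ℕ → S → S → ℝ
  | 0 => fun x y => if x = y then (1 : ℝ) else 0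
  | n + 1 => fun x y => ∑' w, matPow B n x w * B w y

/-- First-return quantities: `fret B z n x` is the probability that the killed chain
with sub-stochastic transition matrix `B`, started at `x`, first hits `z` at time `n`
without having been killed: `f_1(x) = B(x,z)`, `f_{n+1}(x) = ∑_{w ≠ z} B(x,w) f_n(w)`.
(The value at `n = 0` is set to `0` by convention.) -/
noncomputable def fret {S : Type*} [DecidableEq S] (B : S → S → ℝ) (z : S) : ℕ → S → ℝ
  | 0 => fun _ => 0
  | 1 => fun x => B x z
  | n + 2 => fun x => ∑' w, if w = z then 0 else B x w * fret B z (n + 1) w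

/-- `grow B z j y` is the probability that the killed chain started at `z` is at `y`
at time `j` without having been killed or having returned to `z`:
`g_0 = δ_z`, and for `j ≥ 1`, `g_j(z) = 0` and `g_j(y) = ∑_x g_{j-1}(x) B(x,y)` for `y ≠ z`. -/
noncomputable def grow {S : Type*} [DecidableEq S] (B : S → S → ℝ) (z : S) : ℕ → S → ℝ
  | 0 => fun y => if y = z then 1 else 0
  | j + 1 => fun y => if y = z then 0 else ∑' x, grow B z j x * B x y

/-- The Perron-Frobenius column eigenvector candidate
`u*(x) = ∑_{n ≥ 1} e^{θ n} f_n(x)`. -/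
noncomputable def uStar {S : Type*} [DecidableEq S] (B : S → S → ℝ) (z : S) (θ : ℝ)
    (x : S) : ℝ :=
  ∑' n : ℕ, Real.exp (θ * ((n : ℝ) + 1)) * fret B z (n + 1) x

/-- The Perron-Frobenius row eigenvector candidate
`η*(y) = ∑_{j ≥ 0} e^{θ j} g_j(y)`. -/
noncomputable def etaStar {S : Type*} [DecidableEq S] (B : S → S → ℝ) (z : S) (θ : ℝ)
    (y : S) : ℝ :=
  ∑' j : ℕ, Real.exp (θ * (j : ℝ)) * grow B z j y

section PFaux

variable {S : Type*} [DecidableEq S] {B : S → S → ℝ} {z : S}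

lemma fret_one (x : S) : fret B z 1 x = B x z := rfl

lemma fret_two (n : ℕ) (x : S) :
    fret B z (n+2) x = ∑' w, if w = z then 0 else B x w * fret B z (n + 1) w := rfl

lemma grow_zero (y : S) : grow B z 0 y = if y = z then 1 else 0 := rfl

lemma grow_succ (j : ℕ) (y : S) :
    grow B z (j+1) y = if y = z then 0 else ∑' x, grow B z j x * B x y := rfl

lemma matPow_succ (n : ℕ) (x y : S) :
    matPow B (n+1) x y = ∑' w, matPow B n x w * B w y := rfl

lemma matPow_zero (x y : S) : matPow B 0 x y = if x = y then (1:ℝ) else 0 := rfl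

lemma exists_pos_of_tsum_pos {ι : Type*} {f : ι → ℝ} (h0 : ∀ i, 0 ≤ f i)
    (h : 0 < ∑' i, f i) : ∃ i, 0 < f i := by
  by_contra hc
  push_neg at hc
  have hz : f = fun _ => 0 := funext fun i => le_antisymm (hc i) (h0 i)
  rw [hz] at h
  simp at h

lemma pos_parts {a b : ℝ} (ha : 0 ≤ a) (hb : 0 ≤ b) (h : 0 < a * b) : 0 < a ∧ 0 < b := by
  rcases mul_pos_iff.1 h with ⟨h1, h2⟩ | ⟨h1, h2⟩
  · exact ⟨h1, h2⟩
  · exact absurd h1 (not_lt.2 ha)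

section withHyps

variable (hnn : ∀ x y, 0 ≤ B x y) (hrow : ∀ x, Summable (fun y => B x y))
  (hsub : ∀ x, ∑' y, B x y ≤ 1)

include hnn hrow hsub in
lemma B_le_one (x y : S) : B x y ≤ 1 :=
  le_trans (Summable.le_tsum (hrow x) y fun _ _ => hnn x _) (hsub x)

include hnn in
lemma grow_nonneg : ∀ j y, 0 ≤ grow B z j y := by
  intro j
  induction j with
  | zero => intro y; rw [grow_zero]; split <;> norm_num
  | succ j ih =>
    intro y; rw [grow_succ]
    split
    · exact le_refl 0
    · exact tsum_nonneg fun x => mul_nonneg (ih x) (hnn x y)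

include hnn in
lemma fret_nonneg : ∀ n x, 0 ≤ fret B z n x := by
  intro n
  induction n with
  | zero => intro x; simp [fret]
  | succ m ih =>
    cases m with
    | zero => intro x; rw [fret_one]; exact hnn x z
    | succ k =>
      intro x; rw [fret_two]
      refine tsum_nonneg fun w => ?_
      split
      · exact le_refl 0
      · exact mul_nonneg (hnn x w) (ih w)

include hnn in
lemma matPow_nonneg : ∀ n x y, 0 ≤ matPow B n x y := by
  intro n
  induction n with
  | zero => intro x y; rw [matPow_zero]; split <;> norm_num
  | succ n ih =>
    intro x y; rw [matPow_succ]
    exact tsum_nonneg fun w => mul_nonneg (ih x w) (hnn w y)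

include hnn hrow hsub in
lemma fret_le_one : ∀ n x, fret B z (n+1) x ≤ 1 := by
  intro n
  induction n with
  | zero => intro x; rw [fret_one]; exact B_le_one hnn hrow hsub x z
  | succ k ih =>
    intro x
    rw [fret_two]
    have hsum : Summable (fun w => if w = z then 0 else B x w * fret B z (k+1) w) := by
      refine Summable.of_nonneg_of_le (fun w => ?_) (fun w => ?_) (hrow x)
      · split
        · exact le_refl 0
        · exact mul_nonneg (hnn x w) (fret_nonneg hnn _ w)
      · split
        · exact hnn x w
        · exact mul_le_of_le_one_right (hnn x w) (ih w)
    refine le_trans (Summable.tsum_le_tsum (fun w => ?_) hsum (hrow x)) (hsub x)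
    split
    · exact hnn x w
    · exact mul_le_of_le_one_right (hnn x w) (ih w)

include hnn hrow hsub in
lemma fret_int_summable (n : ℕ) (x : S) :
    Summable (fun w => if w = z then 0 else B x w * fret B z (n+1) w) := by
  refine Summable.of_nonneg_of_le (fun w => ?_) (fun w => ?_) (hrow x)
  · split
    · exact le_refl 0
    · exact mul_nonneg (hnn x w) (fret_nonneg hnn _ w)
  · split
    · exact hnn x w
    · exact mul_le_of_le_one_right (hnn x w) (fret_le_one hnn hrow hsub n w)

include hnn hrow hsub in
lemma grow_summable_aux : ∀ j, Summable (grow B z j) ∧ ∑' y, grow B z j y ≤ 1 := by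
  intro j
  induction j with
  | zero =>
    have hs : Summable (grow B z 0) := by
      refine summable_of_ne_finset_zero (s := {z}) (fun y hy => ?_)
      rw [grow_zero, if_neg]
      simpa using hy
    refine ⟨hs, ?_⟩
    have hz0 : ∀ y, y ≠ z → grow B z 0 y = 0 := by
      intro y hy; rw [grow_zero, if_neg hy]
    rw [tsum_eq_single z hz0, grow_zero, if_pos rfl]
  | succ j ih =>
    obtain ⟨hs, hle⟩ := ih
    have h0 : ∀ p : S × S, 0 ≤ grow B z j p.1 * B p.1 p.2 :=
      fun p => mul_nonneg (grow_nonneg hnn _ _) (hnn _ _)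
    have hrowj : Summable (fun x => grow B z j x * ∑' y, B x y) := by
      refine Summable.of_nonneg_of_le
        (fun x => mul_nonneg (grow_nonneg hnn _ _) (tsum_nonneg fun y => hnn x y))
        (fun x => mul_le_of_le_one_right (grow_nonneg hnn _ _) (hsub x)) hs
    have hF : Summable (fun p : S × S => grow B z j p.1 * B p.1 p.2) := by
      refine (summable_prod_of_nonneg h0).2 ⟨fun x => (hrow x).mul_left (grow B z j x), ?_⟩
      have : (fun x => ∑' y, grow B z j x * B x y) = fun x => grow B z j x * ∑' y, B x y := by
        funext x; exact tsum_mul_left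
      rw [this]
      exact hrowj
    have hT : Summable (fun y => ∑' x, grow B z j x * B x y) :=
      ((summable_prod_of_nonneg (fun p => h0 p.swap)).1 hF.prod_symm).2
    have hptle : ∀ y, grow B z (j+1) y ≤ ∑' x, grow B z j x * B x y := by
      intro y; rw [grow_succ]
      split
      · exact tsum_nonneg fun x => h0 (x, y)
      · exact le_refl _
    have hgs : Summable (grow B z (j+1)) :=
      Summable.of_nonneg_of_le (grow_nonneg hnn _) hptle hT
    refine ⟨hgs, ?_⟩
    calc ∑' y, grow B z (j+1) y ≤ ∑' y, ∑' x, grow B z j x * B x y :=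
          Summable.tsum_le_tsum hptle hgs hT
      _ = ∑' x, ∑' y, grow B z j x * B x y :=
          Summable.tsum_comm (f := fun x y => grow B z j x * B x y) hF
      _ = ∑' x, grow B z j x * ∑' y, B x y := tsum_congr fun x => tsum_mul_left
      _ ≤ ∑' x, grow B z j x :=
          Summable.tsum_le_tsum (fun x => mul_le_of_le_one_right (grow_nonneg hnn _ _) (hsub x)) hrowj hs
      _ ≤ 1 := hle

include hnn hrow hsub in
lemma grow_mul_summable (j : ℕ) (y : S) : Summable (fun x => grow B z j x * B x y) :=
  Summable.of_nonneg_of_le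
    (fun x => mul_nonneg (grow_nonneg hnn _ _) (hnn x y))
    (fun x => mul_le_of_le_one_right (grow_nonneg hnn _ _) (B_le_one hnn hrow hsub x y))
    (grow_summable_aux hnn hrow hsub j).1

include hnn hrow hsub in
lemma grow_fret_summable (j n : ℕ) : Summable (fun x => grow B z j x * fret B z (n+1) x) :=
  Summable.of_nonneg_of_le
    (fun x => mul_nonneg (grow_nonneg hnn _ _) (fret_nonneg hnn _ x))
    (fun x => mul_le_of_le_one_right (grow_nonneg hnn _ _) (fret_le_one hnn hrow hsub n x))
    (grow_summable_aux hnn hrow hsub j).1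

include hnn hrow hsub in
lemma key_bridge : ∀ j n, fret B z (j + (n+1)) z = ∑' x, grow B z j x * fret B z (n+1) x := by
  intro j
  induction j with
  | zero =>
    intro n
    have hz0 : ∀ x, x ≠ z → grow B z 0 x * fret B z (n+1) x = 0 := by
      intro x hx; rw [grow_zero, if_neg hx, zero_mul]
    rw [zero_add, tsum_eq_single z hz0, grow_zero, if_pos rfl, one_mul]
  | succ j ih =>
    intro n
    set G : S × S → ℝ :=
      fun p => if p.2 = z then 0 else grow B z j p.1 * (B p.1 p.2 * fret B z (n+1) p.2) with hGdef
    have h0 : ∀ p, 0 ≤ G p := by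
      intro p; rw [hGdef]; dsimp only
      split
      · exact le_refl 0
      · exact mul_nonneg (grow_nonneg hnn _ _)
          (mul_nonneg (hnn _ _) (fret_nonneg hnn _ _))
    have h1 : ∀ w, Summable fun x => G (w, x) := by
      intro w
      refine Summable.of_nonneg_of_le (fun x => h0 (w, x)) (fun x => ?_) ((hrow w).mul_left (grow B z j w))
      rw [hGdef]; dsimp only
      split
      · exact mul_nonneg (grow_nonneg hnn _ _) (hnn _ _)
      · rw [← mul_assoc]
        exact mul_le_of_le_one_right (mul_nonneg (grow_nonneg hnn _ _) (hnn _ _))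
          (fret_le_one hnn hrow hsub n _)
    have hGx : ∀ w, ∑' x, G (w, x) = grow B z j w * fret B z (n+2) w := by
      intro w
      rw [fret_two, ← tsum_mul_left]
      refine tsum_congr fun x => ?_
      rw [hGdef]; dsimp only
      split
      · rw [mul_zero]
      · rfl
    have h2 : Summable fun w => ∑' x, G (w, x) := by
      have : (fun w => ∑' x, G (w, x)) = fun w => grow B z j w * fret B z (n+2) w :=
        funext hGx
      rw [this]
      exact grow_fret_summable hnn hrow hsub j (n+1)
    have hG : Summable G := (summable_prod_of_nonneg h0).2 ⟨h1, h2⟩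
    have lhs_eq : ∑' x, grow B z (j+1) x * fret B z (n+1) x = ∑' x, ∑' w, G (w, x) := by
      refine tsum_congr fun x => ?_
      by_cases hx : x = z
      · subst hx
        rw [grow_succ, if_pos rfl, zero_mul]
        symm
        simp [hGdef]
      · rw [grow_succ, if_neg hx, ← tsum_mul_right]
        refine tsum_congr fun w => ?_
        rw [hGdef]; dsimp only
        rw [if_neg hx, mul_assoc]
    rw [lhs_eq, Summable.tsum_comm (f := fun w x => G (w, x)) hG, tsum_congr hGx, ← ih (n+1)]
    congr 1
    omega

include hnn hrow hsub in
lemma key_bridge' (j : ℕ) : fret B z (j+1) z = ∑' x, grow B z j x * B x z := by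
  simpa [fret_one] using key_bridge hnn hrow hsub j 0

include hnn hrow hsub in
lemma matPow_row : ∀ n x, Summable (matPow B n x) ∧ ∑' y, matPow B n x y ≤ 1 := by
  intro n
  induction n with
  | zero =>
    intro x
    have hs : Summable (matPow B 0 x) := by
      refine summable_of_ne_finset_zero (s := {x}) (fun y hy => ?_)
      simp only [Finset.mem_singleton] at hy
      rw [matPow_zero, if_neg (fun h => hy h.symm)]
    refine ⟨hs, ?_⟩
    have hz0 : ∀ y, y ≠ x → matPow B 0 x y = 0 := by
      intro y hy; rw [matPow_zero, if_neg (fun h => hy h.symm)]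
    rw [tsum_eq_single x hz0, matPow_zero, if_pos rfl]
  | succ n ih =>
    intro x
    obtain ⟨hs, hle⟩ := ih x
    have h0 : ∀ p : S × S, 0 ≤ matPow B n x p.1 * B p.1 p.2 :=
      fun p => mul_nonneg (matPow_nonneg hnn _ _ _) (hnn _ _)
    have hrown : Summable (fun w => matPow B n x w * ∑' y, B w y) := by
      refine Summable.of_nonneg_of_le
        (fun w => mul_nonneg (matPow_nonneg hnn _ _ _) (tsum_nonneg fun y => hnn w y))
        (fun w => mul_le_of_le_one_right (matPow_nonneg hnn _ _ _) (hsub w)) hs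
    have hF : Summable (fun p : S × S => matPow B n x p.1 * B p.1 p.2) := by
      refine (summable_prod_of_nonneg h0).2 ⟨fun w => (hrow w).mul_left (matPow B n x w), ?_⟩
      have : (fun w => ∑' y, matPow B n x w * B w y) = fun w => matPow B n x w * ∑' y, B w y := by
        funext w; exact tsum_mul_left
      rw [this]; exact hrown
    have hT : Summable (fun y => ∑' w, matPow B n x w * B w y) :=
      ((summable_prod_of_nonneg (fun p => h0 p.swap)).1 hF.prod_symm).2
    have hmp : Summable (matPow B (n+1) x) := by
      have : matPow B (n+1) x = fun y => ∑' w, matPow B n x w * B w y := by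
        funext y; exact matPow_succ n x y
      rw [this]; exact hT
    refine ⟨hmp, ?_⟩
    have e1 : ∑' y, matPow B (n+1) x y = ∑' y, ∑' w, matPow B n x w * B w y :=
      tsum_congr fun y => matPow_succ n x y
    rw [e1, Summable.tsum_comm (f := fun w y => matPow B n x w * B w y) hF]
    calc ∑' w, ∑' y, matPow B n x w * B w y
        = ∑' w, matPow B n x w * ∑' y, B w y := tsum_congr fun w => tsum_mul_left
      _ ≤ ∑' w, matPow B n x w :=
          Summable.tsum_le_tsum (fun w => mul_le_of_le_one_right (matPow_nonneg hnn _ _ _) (hsub w)) hrown hs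
      _ ≤ 1 := hle

include hnn hrow hsub in
lemma matPow_front : ∀ n x y, matPow B (n+1) x y = ∑' w, B x w * matPow B n w y := by
  intro n
  induction n with
  | zero =>
    intro x y
    have hz1 : ∀ w, w ≠ x → matPow B 0 x w * B w y = 0 := by
      intro w hw; rw [matPow_zero, if_neg (fun h => hw h.symm), zero_mul]
    have hz2 : ∀ w, w ≠ y → B x w * matPow B 0 w y = 0 := by
      intro w hw; rw [matPow_zero, if_neg hw, mul_zero]
    rw [matPow_succ, tsum_eq_single x hz1, tsum_eq_single y hz2]
    rw [matPow_zero, matPow_zero, if_pos rfl, if_pos rfl, one_mul, mul_one]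
  | succ n ih =>
    intro x y
    set H : S × S → ℝ := fun p => B x p.1 * (matPow B n p.1 p.2 * B p.2 y) with hHdef
    have h0 : ∀ p, 0 ≤ H p := fun p => mul_nonneg (hnn _ _)
      (mul_nonneg (matPow_nonneg hnn _ _ _) (hnn _ _))
    have hinner : ∀ v, Summable (fun w => matPow B n v w * B w y) := by
      intro v
      refine Summable.of_nonneg_of_le
        (fun w => mul_nonneg (matPow_nonneg hnn _ _ _) (hnn _ _))
        (fun w => mul_le_of_le_one_right (matPow_nonneg hnn _ _ _) (B_le_one hnn hrow hsub w y))
        (matPow_row hnn hrow hsub n v).1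
    have hinnerle : ∀ v, ∑' w, matPow B n v w * B w y ≤ 1 := by
      intro v
      refine le_trans (Summable.tsum_le_tsum
        (fun w => mul_le_of_le_one_right (matPow_nonneg hnn _ _ _) (B_le_one hnn hrow hsub w y))
        (hinner v) (matPow_row hnn hrow hsub n v).1) (matPow_row hnn hrow hsub n v).2
    have h1 : ∀ v, Summable fun w => H (v, w) := fun v => (hinner v).mul_left (B x v)
    have hHx : ∀ v, ∑' w, H (v, w) = B x v * ∑' w, matPow B n v w * B w y := by
      intro v
      simp only [hHdef]
      exact tsum_mul_left
    have h2 : Summable fun v => ∑' w, H (v, w) := by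
      refine Summable.of_nonneg_of_le (fun v => tsum_nonneg fun w => h0 (v, w))
        (fun v => ?_) (hrow x)
      rw [hHx]
      exact mul_le_of_le_one_right (hnn x v)
        (le_trans (hinnerle v) le_rfl)
    have hH : Summable H := (summable_prod_of_nonneg h0).2 ⟨h1, h2⟩
    rw [matPow_succ]
    calc ∑' w, matPow B (n+1) x w * B w y
        = ∑' w, (∑' v, B x v * matPow B n v w) * B w y := by
          refine tsum_congr fun w => ?_; rw [ih x w]
      _ = ∑' w, ∑' v, H (v, w) := by
          refine tsum_congr fun w => ?_
          rw [← tsum_mul_right]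
          refine tsum_congr fun v => ?_
          rw [hHdef]; dsimp only; ring
      _ = ∑' v, ∑' w, H (v, w) := Summable.tsum_comm (f := fun v w => H (v, w)) hH
      _ = ∑' v, B x v * ∑' w, matPow B n v w * B w y := tsum_congr hHx
      _ = ∑' v, B x v * matPow B (n+1) v y := by
          refine tsum_congr fun v => ?_
          rw [matPow_succ]

include hnn hrow hsub in
lemma exists_fret_pos (y : S) (h : ∃ n, 1 ≤ n ∧ 0 < matPow B n y z) :
    ∃ m, 1 ≤ m ∧ 0 < fret B z m y := by
  obtain ⟨n, hn1, hnpos⟩ := h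
  obtain ⟨k, rfl⟩ : ∃ k, n = k + 1 := ⟨n - 1, by omega⟩
  clear hn1
  induction k generalizing y with
  | zero =>
    rw [matPow_front hnn hrow hsub 0 y z] at hnpos
    obtain ⟨w, hw⟩ := exists_pos_of_tsum_pos
      (fun w => mul_nonneg (hnn _ _) (matPow_nonneg hnn _ _ _)) hnpos
    obtain ⟨hBw, hMw⟩ := pos_parts (hnn _ _) (matPow_nonneg hnn _ _ _) hw
    have hwz : w = z := by
      by_contra hne
      rw [matPow_zero, if_neg hne] at hMw
      exact lt_irrefl 0 hMw
    subst hwz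
    exact ⟨1, le_refl 1, by rw [fret_one]; exact hBw⟩
  | succ k ih =>
    rw [matPow_front hnn hrow hsub (k+1) y z] at hnpos
    obtain ⟨w, hw⟩ := exists_pos_of_tsum_pos
      (fun w => mul_nonneg (hnn _ _) (matPow_nonneg hnn _ _ _)) hnpos
    obtain ⟨hBw, hMw⟩ := pos_parts (hnn _ _) (matPow_nonneg hnn _ _ _) hw
    by_cases hwz : w = z
    · subst hwz
      exact ⟨1, le_refl 1, by rw [fret_one]; exact hBw⟩
    · obtain ⟨m, hm1, hmpos⟩ := ih w hMw
      obtain ⟨k', rfl⟩ : ∃ k', m = k' + 1 := ⟨m - 1, by omega⟩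
      refine ⟨k' + 2, by omega, ?_⟩
      rw [fret_two]
      have hterm : (0:ℝ) < (if w = z then 0 else B y w * fret B z (k'+1) w) := by
        rw [if_neg hwz]
        exact mul_pos hBw hmpos
      refine lt_of_lt_of_le hterm (Summable.le_tsum (fret_int_summable hnn hrow hsub k' y) w ?_)
      intro v _
      split
      · exact le_refl 0
      · exact mul_nonneg (hnn _ _) (fret_nonneg hnn _ _)

include hnn hrow hsub in
lemma exists_grow_pos (y : S) (h : ∃ n, 1 ≤ n ∧ 0 < matPow B n z y) :
    ∃ j, 0 < grow B z j y := by
  obtain ⟨n, hn1, hnpos⟩ := h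
  clear hn1
  induction n generalizing y with
  | zero =>
    rw [matPow_zero] at hnpos
    have : z = y := by
      by_contra hne
      rw [if_neg hne] at hnpos
      exact lt_irrefl 0 hnpos
    subst this
    exact ⟨0, by rw [grow_zero, if_pos rfl]; norm_num⟩
  | succ n ih =>
    rw [matPow_succ] at hnpos
    obtain ⟨w, hw⟩ := exists_pos_of_tsum_pos
      (fun w => mul_nonneg (matPow_nonneg hnn _ _ _) (hnn _ _)) hnpos
    obtain ⟨hMw, hBw⟩ := pos_parts (matPow_nonneg hnn _ _ _) (hnn _ _) hw
    by_cases hyz : y = z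
    · subst hyz
      exact ⟨0, by rw [grow_zero, if_pos rfl]; norm_num⟩
    · obtain ⟨j, hj⟩ := ih w hMw
      refine ⟨j + 1, ?_⟩
      rw [grow_succ, if_neg hyz]
      have hterm : (0:ℝ) < grow B z j w * B w y := mul_pos hj hBw
      refine lt_of_lt_of_le hterm (Summable.le_tsum (grow_mul_summable hnn hrow hsub j y) w ?_)
      intro v _
      exact mul_nonneg (grow_nonneg hnn _ _) (hnn _ _)

end withHyps

end PFaux


/-- Theorem 1 (row eigenvector part): under A1, `η*` is strictly positive and
finite on `S`, satisfies `η* B = λ* η*` with `λ* = e^{-θ}`, and `η*(z) = 1`. -/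
theorem stmt5 {S : Type*} [Countable S] [Nonempty S] [DecidableEq S]
    (B : S → S → ℝ)
    (hnn : ∀ x y, 0 ≤ B x y)
    (hrow : ∀ x, Summable (fun y => B x y))
    (hsub : ∀ x, ∑' y, B x y ≤ 1)
    (hirr : ∀ x y, ∃ n, 1 ≤ n ∧ 0 < matPow B n x y)
    (z : S) (θ : ℝ) (hθ : 0 ≤ θ)
    (hA1 : ∑' n : ℕ, Real.exp (θ * ((n : ℝ) + 1)) * fret B z (n + 1) z = 1) :
    (∀ y, Summable (fun j : ℕ => Real.exp (θ * (j : ℝ)) * grow B z j y)) ∧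
    (∀ y, 0 < etaStar B z θ y) ∧
    (∀ y, ∑' x, etaStar B z θ x * B x y = Real.exp (-θ) * etaStar B z θ y) ∧
    etaStar B z θ z = 1 := by
  have ha : Summable (fun n : ℕ => Real.exp (θ * ((n : ℝ) + 1)) * fret B z (n + 1) z) := by
    by_contra hcon
    rw [tsum_eq_zero_of_not_summable hcon] at hA1
    norm_num at hA1
  have htn : ∀ y (j : ℕ), 0 ≤ Real.exp (θ * (j : ℝ)) * grow B z j y :=
    fun y j => mul_nonneg (Real.exp_pos _).le (grow_nonneg hnn j y)
  have hS : ∀ y, Summable (fun j : ℕ => Real.exp (θ * (j : ℝ)) * grow B z j y) := by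
    intro y
    obtain ⟨m, hm1, hc⟩ := exists_fret_pos hnn hrow hsub y (hirr y z)
    obtain ⟨k, rfl⟩ : ∃ k, m = k + 1 := ⟨m - 1, by omega⟩
    have hcpos : 0 < fret B z (k+1) y := hc
    have hcomp : Summable (fun j : ℕ =>
        (fret B z (k+1) y)⁻¹ *
          (Real.exp (θ * (((j + k : ℕ) : ℝ) + 1)) * fret B z (j + k + 1) z)) := by
      have := (summable_nat_add_iff
        (f := fun n : ℕ => Real.exp (θ * ((n : ℝ) + 1)) * fret B z (n + 1) z) k).2 ha
      exact this.mul_left ((fret B z (k+1) y)⁻¹)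
    refine Summable.of_nonneg_of_le (fun j => htn y j) (fun j => ?_) hcomp
    have h1 : grow B z j y * fret B z (k+1) y ≤ fret B z (j + (k+1)) z := by
      rw [key_bridge hnn hrow hsub j k]
      exact Summable.le_tsum (grow_fret_summable hnn hrow hsub j k) y
        (fun v _ => mul_nonneg (grow_nonneg hnn _ _) (fret_nonneg hnn _ _))
    have hexp : Real.exp (θ * (j : ℝ)) ≤ Real.exp (θ * (((j + k : ℕ) : ℝ) + 1)) := by
      apply Real.exp_le_exp.2
      push_cast
      nlinarith [hθ, Nat.cast_nonneg (α := ℝ) k]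
    have h2 : Real.exp (θ * (j : ℝ)) * (grow B z j y * fret B z (k+1) y) ≤
        Real.exp (θ * (((j + k : ℕ) : ℝ) + 1)) * fret B z (j + k + 1) z := by
      have h1' : grow B z j y * fret B z (k+1) y ≤ fret B z (j + k + 1) z := h1
      exact mul_le_mul hexp h1'
        (mul_nonneg (grow_nonneg hnn _ _) (fret_nonneg hnn _ _)) (Real.exp_pos _).le
    rw [← mul_le_mul_iff_right₀ hcpos]
    calc fret B z (k+1) y * (Real.exp (θ * (j : ℝ)) * grow B z j y)
        = Real.exp (θ * (j : ℝ)) * (grow B z j y * fret B z (k+1) y) := by ring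
      _ ≤ Real.exp (θ * (((j + k : ℕ) : ℝ) + 1)) * fret B z (j + k + 1) z := h2
      _ = fret B z (k+1) y * ((fret B z (k+1) y)⁻¹ *
            (Real.exp (θ * (((j + k : ℕ) : ℝ) + 1)) * fret B z (j + k + 1) z)) := by
          rw [← mul_assoc, mul_inv_cancel₀ (ne_of_gt hcpos), one_mul]
  have h4 : etaStar B z θ z = 1 := by
    unfold etaStar
    rw [tsum_eq_single 0 ?_]
    · rw [grow_zero, if_pos rfl]
      simp
    · intro j hj
      obtain ⟨i, rfl⟩ : ∃ i, j = i + 1 := ⟨j - 1, by omega⟩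
      rw [grow_succ, if_pos rfl, mul_zero]
  have hpos : ∀ y, 0 < etaStar B z θ y := by
    intro y
    obtain ⟨j0, hj0⟩ := exists_grow_pos hnn hrow hsub y (hirr z y)
    have h : 0 < Real.exp (θ * (j0 : ℝ)) * grow B z j0 y := mul_pos (Real.exp_pos _) hj0
    exact lt_of_lt_of_le h (Summable.le_tsum (hS y) j0 fun i _ => htn y i)
  refine ⟨hS, hpos, ?_, h4⟩
  intro y
  have hexpsplit : ∀ j : ℕ, Real.exp (θ * (j : ℝ)) =
      Real.exp (-θ) * Real.exp (θ * ((j : ℝ) + 1)) := by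
    intro j; rw [← Real.exp_add]; congr 1; ring
  by_cases hy : y = z
  · rw [hy]
    set f : ℕ → S → ℝ := fun j x => Real.exp (θ * (j : ℝ)) * (grow B z j x * B x z) with hfdef
    have h0 : ∀ p : ℕ × S, 0 ≤ Function.uncurry f p := fun p =>
      mul_nonneg (Real.exp_pos _).le (mul_nonneg (grow_nonneg hnn _ _) (hnn _ _))
    have h1 : ∀ j, Summable (f j) := fun j =>
      (grow_mul_summable hnn hrow hsub j z).mul_left (Real.exp (θ * (j : ℝ)))
    have hfa : ∀ j, ∑' x, f j x = Real.exp (θ * (j : ℝ)) * ∑' x, grow B z j x * B x z :=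
      fun j => tsum_mul_left
    have hbr : ∀ j, ∑' x, grow B z j x * B x z = fret B z (j+1) z := by
      intro j
      exact (key_bridge' hnn hrow hsub j).symm
    have hval : ∀ j, ∑' x, f j x =
        Real.exp (-θ) * (Real.exp (θ * ((j : ℝ) + 1)) * fret B z (j+1) z) := by
      intro j
      rw [hfa j, hbr j, hexpsplit j, mul_assoc]
    have h2 : Summable fun j => ∑' x, f j x := by
      rw [funext hval]
      exact ha.mul_left (Real.exp (-θ))
    have hF : Summable (Function.uncurry f) :=
      (summable_prod_of_nonneg h0).2 ⟨h1, h2⟩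
    calc ∑' x, etaStar B z θ x * B x z = ∑' x, ∑' j, f j x := by
          refine tsum_congr fun x => ?_
          unfold etaStar
          rw [← tsum_mul_right]
          exact tsum_congr fun j => mul_assoc _ _ _
      _ = ∑' j, ∑' x, f j x := Summable.tsum_comm (f := f) hF
      _ = ∑' j : ℕ, Real.exp (-θ) * (Real.exp (θ * ((j : ℝ) + 1)) * fret B z (j+1) z) :=
          tsum_congr hval
      _ = Real.exp (-θ) * ∑' j : ℕ, Real.exp (θ * ((j : ℝ) + 1)) * fret B z (j+1) z :=
          tsum_mul_left
      _ = Real.exp (-θ) * etaStar B z θ z := by rw [hA1, h4]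
  · set f : ℕ → S → ℝ := fun j x => Real.exp (θ * (j : ℝ)) * (grow B z j x * B x y) with hfdef
    have h0 : ∀ p : ℕ × S, 0 ≤ Function.uncurry f p := fun p =>
      mul_nonneg (Real.exp_pos _).le (mul_nonneg (grow_nonneg hnn _ _) (hnn _ _))
    have h1 : ∀ j, Summable (f j) := fun j =>
      (grow_mul_summable hnn hrow hsub j y).mul_left (Real.exp (θ * (j : ℝ)))
    have hfa : ∀ j, ∑' x, f j x = Real.exp (θ * (j : ℝ)) * ∑' x, grow B z j x * B x y :=
      fun j => tsum_mul_left
    have hbr : ∀ j, ∑' x, grow B z j x * B x y = grow B z (j+1) y := by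
      intro j
      rw [grow_succ, if_neg hy]
    have hcast : ∀ j : ℕ, Real.exp (θ * ((j : ℝ) + 1)) =
        Real.exp (θ * (((j + 1 : ℕ)) : ℝ)) := by
      intro j; congr 1; push_cast; ring
    have hval : ∀ j, ∑' x, f j x =
        Real.exp (-θ) * (Real.exp (θ * (((j + 1 : ℕ)) : ℝ)) * grow B z (j+1) y) := by
      intro j
      rw [hfa j, hbr j, hexpsplit j, hcast j, mul_assoc]
    have hshift : Summable (fun j : ℕ =>
        Real.exp (θ * (((j + 1 : ℕ)) : ℝ)) * grow B z (j+1) y) :=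
      (summable_nat_add_iff (f := fun n : ℕ => Real.exp (θ * (n : ℝ)) * grow B z n y) 1).2 (hS y)
    have h2 : Summable fun j => ∑' x, f j x := by
      rw [funext hval]
      exact hshift.mul_left (Real.exp (-θ))
    have hF : Summable (Function.uncurry f) :=
      (summable_prod_of_nonneg h0).2 ⟨h1, h2⟩
    have hzero : Real.exp (θ * ((0 : ℕ) : ℝ)) * grow B z 0 y = 0 := by
      rw [grow_zero, if_neg hy, mul_zero]
    have hsplit : ∑' j : ℕ, Real.exp (θ * (((j + 1 : ℕ)) : ℝ)) * grow B z (j+1) y =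
        etaStar B z θ y := by
      have := Summable.tsum_eq_zero_add (hS y)
      unfold etaStar
      rw [this, hzero, zero_add]
    calc ∑' x, etaStar B z θ x * B x y = ∑' x, ∑' j, f j x := by
          refine tsum_congr fun x => ?_
          unfold etaStar
          rw [← tsum_mul_right]
          exact tsum_congr fun j => mul_assoc _ _ _
      _ = ∑' j, ∑' x, f j x := Summable.tsum_comm (f := f) hF
      _ = ∑' j, Real.exp (-θ) * (Real.exp (θ * (((j + 1 : ℕ)) : ℝ)) * grow B z (j+1) y) :=
          tsum_congr hval
      _ = Real.exp (-θ) * ∑' j, Real.exp (θ * (((j + 1 : ℕ)) : ℝ)) * grow B z (j+1) y :=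
          tsum_mul_left
      _ = Real.exp (-θ) * etaStar B z θ y := by rw [hsplit]
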